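/- arXiv:1703.08216 — 3 statements merged into one kernel-verified Lean document; each statement's English description precedes it below -/
import Mathlib

section
/- Let H, M be real Hilbert spaces, T : H → M* bounded linear satisfying ‖T*q‖_{H*} ≥ C‖q‖_M for all q ∈ M and some C > 0, and J : H → ℝ convex and Fréchet differentiable. Then u ∈ Ker T minimises J over Ker T if and only if there exists p ∈ M with T*p = ∇J(u); moreover such p, if it exists, is unique. -/
/-!
On the subspace `Ker T`, `u` minimises the convex function `J` iff `∇J(u)` annihilates `Ker T`:
the first-order condition gives necessity, the tangent-line inequality sufficiency. Since
`Ker T = ⋂_q Ker (T* q)`, it remains to see that a functional annihilating this intersection lies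
in the range of `T*`. Under Riesz, this range is a subspace `K` of `H` with `Ker T = Kᗮ`, and `K`
is closed because the lower bound `C‖q‖ ≤ ‖T* q‖` makes `T*` antilipschitz on the complete
space `M`; hence `Kᗮᗮ = K`. The same bound makes `T*` injective, so `p` is unique.
-/

open InnerProductSpace

theorem ConvexOn.add_fderiv_sub_le {E : Type*} [NormedAddCommGroup E] [NormedSpace ℝ E]
    {s : Set E} {f : E → ℝ} {f' : StrongDual ℝ E} {x y : E} (hf : ConvexOn ℝ s f)
    (hx : x ∈ s) (hy : y ∈ s) (hf' : HasFDerivAt f f' x) : f x + f' (y - x) ≤ f y := by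
  let L : ℝ →ᵃ[ℝ] E := AffineMap.lineMap x y
  have hline : ConvexOn ℝ (L ⁻¹' s) (f ∘ L) := hf.comp_affineMap L
  have hL0 : L 0 = x := AffineMap.lineMap_apply_zero x y
  have hL1 : L 1 = y := AffineMap.lineMap_apply_one x y
  have hderiv : HasDerivAt (f ∘ L) (f' (y - x)) 0 := by
    refine HasFDerivAt.comp_hasDerivAt (0 : ℝ) ?_ AffineMap.hasDerivAt_lineMap
    rwa [hL0]
  have hslope := hline.le_slope_of_hasDerivAt (x := 0) (y := 1) (by simpa [hL0]) (by simpa [hL1])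
    one_pos hderiv
  simp only [slope_def_field, Function.comp_apply, hL0, hL1, sub_zero, div_one] at hslope
  linarith

theorem IsLocalMinOn.hasFDerivAt_apply_eq_zero {E : Type*} [NormedAddCommGroup E]
    [NormedSpace ℝ E] {K : Submodule ℝ E} {f : E → ℝ} {f' : StrongDual ℝ E} {a v : E}
    (h : IsLocalMinOn f K a) (ha : a ∈ K) (hf : HasFDerivAt f f' a) (hv : v ∈ K) :
    f' v = 0 := by
  have hcone : ∀ w ∈ K, w ∈ posTangentConeAt (K : Set E) a := fun w hw =>
    mem_posTangentConeAt_of_segment_subset <|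
      K.convex.segment_subset ha (K.add_mem ha hw)
  exact h.hasFDerivWithinAt_eq_zero hf.hasFDerivWithinAt (hcone v hv) (hcone (-v) (K.neg_mem hv))

theorem StrongDual.mem_range_of_isClosed_range {E H : Type*} [NormedAddCommGroup E]
    [NormedSpace ℝ E] [NormedAddCommGroup H] [InnerProductSpace ℝ H] [CompleteSpace H]
    {S : E →L[ℝ] StrongDual ℝ H} (hS : IsClosed (Set.range S)) {ℓ : StrongDual ℝ H}
    (hℓ : ∀ w, (∀ q, S q w = 0) → ℓ w = 0) : ℓ ∈ Set.range S := by
  let R : StrongDual ℝ H ≃ₗᵢ[ℝ] H := (toDual ℝ H).symm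
  let K : Submodule ℝ H := LinearMap.range (((R : StrongDual ℝ H →L[ℝ] H) ∘L S) : E →ₗ[ℝ] H)
  have hK : IsClosed (K : Set H) := by
    rw [LinearMap.coe_range, ContinuousLinearMap.coe_coe, ContinuousLinearMap.coe_comp,
      Set.range_comp]
    exact R.toHomeomorph.isClosedMap _ hS
  have hRℓ : R ℓ ∈ Kᗮᗮ := by
    refine (Submodule.mem_orthogonal _ _).2 fun w hw => ?_
    have hSw : ∀ q, S q w = 0 := fun q => toDual_symm_apply.symm.trans (hw _ ⟨q, rfl⟩)
    rw [real_inner_comm]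
    exact toDual_symm_apply.trans (hℓ w hSw)
  rw [Submodule.orthogonal_orthogonal_eq_closure, hK.submodule_topologicalClosure_eq] at hRℓ
  obtain ⟨p, hp⟩ := hRℓ
  exact ⟨p, R.injective hp⟩

/-- The Lagrange multiplier theorem in Hilbert spaces: with `S = T*` satisfying
`‖T*q‖ ≥ C‖q‖` and `J` convex Fréchet differentiable, `u ∈ Ker T` minimises
`J` over `Ker T` iff `∇J(u) = T*p` for some `p ∈ M`; such `p` is unique. -/
theorem lagrange_multiplier_hilbert
    {H M : Type*} [NormedAddCommGroup H] [InnerProductSpace ℝ H] [CompleteSpace H]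
    [NormedAddCommGroup M] [InnerProductSpace ℝ M] [CompleteSpace M]
    (T : H →L[ℝ] StrongDual ℝ M) (S : M →L[ℝ] StrongDual ℝ H)
    (hadj : ∀ (q : M) (u : H), S q u = T u q)
    (C : ℝ) (hC : 0 < C) (hbound : ∀ q : M, C * ‖q‖ ≤ ‖S q‖)
    (J : H → ℝ) (J' : H → StrongDual ℝ H)
    (hconv : ConvexOn ℝ Set.univ J) (hderiv : ∀ x, HasFDerivAt J (J' x) x)
    (u : H) (hu : u ∈ LinearMap.ker (T : H →ₗ[ℝ] StrongDual ℝ M)) :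
    ((∀ v ∈ LinearMap.ker (T : H →ₗ[ℝ] StrongDual ℝ M), J u ≤ J v) ↔ ∃ p : M, S p = J' u) ∧
      ∀ p p' : M, S p = J' u → S p' = J' u → p = p' := by
  have hanti : AntilipschitzWith ⟨C⁻¹, inv_nonneg.2 hC.le⟩ S :=
    S.antilipschitz_of_bound fun q => (le_inv_mul_iff₀ hC).2 (hbound q)
  have hker : ∀ w, w ∈ LinearMap.ker (T : H →ₗ[ℝ] StrongDual ℝ M) ↔ ∀ q, S q w = 0 := by
    simp [hadj, ContinuousLinearMap.ext_iff]
  refine ⟨⟨fun hmin => ?_, fun ⟨p, hp⟩ v hv => ?_⟩,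
    fun p p' hp hp' => hanti.injective (hp.trans hp'.symm)⟩
  · have hcrit : ∀ w, (∀ q, S q w = 0) → J' u w = 0 := fun w hw =>
      IsLocalMinOn.hasFDerivAt_apply_eq_zero (IsMinOn.localize hmin) hu (hderiv u) ((hker w).2 hw)
    exact StrongDual.mem_range_of_isClosed_range (hanti.isClosed_range S.uniformContinuous) hcrit
  · have hdir : J' u (v - u) = 0 := by
      rw [← hp, map_sub, (hker v).1 hv, (hker u).1 hu, sub_zero]
    have htangent := hconv.add_fderiv_sub_le (Set.mem_univ u) (Set.mem_univ v) (hderiv u)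
    linarith
end

section
/- Let Ω ⊂ ℝⁿ be a bounded smooth domain, f ∈ L²(Ω)ⁿ, V = {v ∈ H₀¹(Ω)ⁿ : div v = 0}, and J(v) = ½(∇v,∇v) − (f,v). Assume the pressure estimate ‖q‖_{L²} ≤ C‖∇q‖_{H⁻¹} for all q ∈ L₀²(Ω). Then u ∈ V minimises J over V if and only if there exists p ∈ L₀²(Ω) such that (∇u, ∇v) − (p, div v) = (f, v) for all v ∈ H₀¹(Ω)ⁿ; i.e. the weak stationary Stokes pressure p is the Lagrange multiplier of the incompressibility constraint div u = 0, and p is unique. -/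
/-!
Expanding `J (u + t v)` in `t` shows that `u` minimises `J` on `ker div` iff the residual `w`,
the Riesz representative of `v ↦ (∇u, ∇v) - (f, v)`, annihilates `ker div`. Under the Riesz
isometry, `q ↦ ∇q ∈ H⁻¹` is the Hilbert adjoint `div†`, so the Nečas estimate says that `div†`
is bounded below: it is injective and has closed range, and its range is then `(ker div)ᗮ`.
Hence `w = div† p` for exactly one `p`, which is the weak Stokes equation.
-/

open scoped RealInnerProductSpace InnerProduct

theorem eq_zero_of_forall_mul_add_mul_sq_nonneg {a b : ℝ} (h : ∀ t : ℝ, 0 ≤ b * t + a * t ^ 2) :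
    b = 0 := by
  have hdiscrim := discrim_le_zero (a := a) (b := b) (c := 0) fun t => by
    linarith [h t, show t * t = t ^ 2 by ring]
  rw [discrim] at hdiscrim
  exact pow_eq_zero_iff two_ne_zero |>.mp (by nlinarith [sq_nonneg b])

theorem AddMonoidHomClass.antilipschitz_toNNReal_of_bound {𝓕 E F : Type*}
    [SeminormedAddCommGroup E] [SeminormedAddCommGroup F] [FunLike 𝓕 E F]
    [AddMonoidHomClass 𝓕 E F] (f : 𝓕) {C : ℝ} (h : ∀ x, ‖x‖ ≤ C * ‖f x‖) :
    AntilipschitzWith C.toNNReal f :=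
  AddMonoidHomClass.antilipschitz_of_bound f fun x =>
    (h x).trans (mul_le_mul_of_nonneg_right C.le_coe_toNNReal (norm_nonneg _))

section QuadraticEnergy

variable {H G : Type*} [AddCommGroup H] [Module ℝ H]
  [NormedAddCommGroup G] [InnerProductSpace ℝ G]

noncomputable def quadraticEnergy (A : H →ₗ[ℝ] G) (ℓ : H →ₗ[ℝ] ℝ) (v : H) : ℝ :=
  (1 / 2) * ⟪A v, A v⟫ - ℓ v

theorem quadraticEnergy_add (A : H →ₗ[ℝ] G) (ℓ : H →ₗ[ℝ] ℝ) (u w : H) :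
    quadraticEnergy A ℓ (u + w) =
      quadraticEnergy A ℓ u + (⟪A u, A w⟫ - ℓ w) + (1 / 2) * ⟪A w, A w⟫ := by
  simp only [quadraticEnergy, map_add, inner_add_left, inner_add_right, real_inner_comm (A u)]
  ring

theorem forall_quadraticEnergy_le_iff (A : H →ₗ[ℝ] G) (ℓ : H →ₗ[ℝ] ℝ) {K : Submodule ℝ H}
    {u : H} (hu : u ∈ K) :
    (∀ v ∈ K, quadraticEnergy A ℓ u ≤ quadraticEnergy A ℓ v) ↔ ∀ v ∈ K, ⟪A u, A v⟫ = ℓ v := by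
  constructor
  · intro hmin v hv
    refine sub_eq_zero.mp <| eq_zero_of_forall_mul_add_mul_sq_nonneg (a := (1 / 2) * ⟪A v, A v⟫)
      fun t => ?_
    have := hmin (u + t • v) (K.add_mem hu (K.smul_mem t hv))
    rw [quadraticEnergy_add] at this
    simp only [map_smul, inner_smul_right, inner_smul_left, RCLike.conj_to_real,
      smul_eq_mul] at this
    nlinarith
  · intro hEL v hv
    have hexp := quadraticEnergy_add A ℓ u (v - u)
    rw [add_sub_cancel, hEL _ (K.sub_mem hv hu), sub_self, add_zero] at hexp
    nlinarith [real_inner_self_nonneg (x := A (v - u))]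

end QuadraticEnergy

namespace ContinuousLinearMap

variable {E F : Type*} [NormedAddCommGroup E] [InnerProductSpace ℝ E] [CompleteSpace E]
  [NormedAddCommGroup F] [InnerProductSpace ℝ F] [CompleteSpace F]

theorem norm_adjoint_apply_eq_of_apply_eq_inner (T : E →L[ℝ] F) {S : F → StrongDual ℝ E}
    (hS : ∀ q v, S q v = ⟪T v, q⟫) (q : F) : ‖(T†) q‖ = ‖S q‖ := by
  have : S q = InnerProductSpace.toDual ℝ E ((T†) q) := by
    ext v
    rw [hS, InnerProductSpace.toDual_apply_apply, adjoint_inner_left, real_inner_comm]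
  rw [this, LinearIsometryEquiv.norm_map]

-- A bounded-below adjoint has closed range, so the closure in `orthogonal_ker` can be dropped.
theorem orthogonal_ker_eq_range_adjoint_of_bound (T : E →L[ℝ] F) {C : ℝ}
    (hT : ∀ q, ‖q‖ ≤ C * ‖(T†) q‖) : T.kerᗮ = T†.range := by
  have hclosed : IsClosed (T†.range : Set E) :=
    (AddMonoidHomClass.antilipschitz_toNNReal_of_bound (T†) hT).isClosed_range
      (T†).uniformContinuous
  rw [T.orthogonal_ker, hclosed.submodule_topologicalClosure_eq]

theorem existsUnique_inner_eq_inner_apply_iff (T : E →L[ℝ] F) {C : ℝ}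
    (hT : ∀ q, ‖q‖ ≤ C * ‖(T†) q‖) (w : E) :
    (∃! p : F, ∀ v, ⟪w, v⟫ = ⟪p, T v⟫) ↔ ∀ v, T v = 0 → ⟪w, v⟫ = 0 := by
  have hmultiplier (p : F) : (∀ v, ⟪w, v⟫ = ⟪p, T v⟫) ↔ (T†) p = w := by
    simp only [← adjoint_inner_left, eq_comm (a := ⟪w, _⟫)]
    exact ⟨ext_inner_right ℝ, fun h v => h ▸ rfl⟩
  have hinjective := (AddMonoidHomClass.antilipschitz_toNNReal_of_bound (T†) hT).injective
  rw [existsUnique_congr hmultiplier, ← hinjective.mem_range_iff_existsUnique]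
  change w ∈ (T†).range ↔ _
  rw [← T.orthogonal_ker_eq_range_adjoint_of_bound hT, Submodule.mem_orthogonal']
  rfl

end ContinuousLinearMap

theorem stokes_pressure_is_lagrange_multiplier_general
    {H F G L : Type*}
    [NormedAddCommGroup H] [InnerProductSpace ℝ H] [CompleteSpace H]
    [NormedAddCommGroup F] [InnerProductSpace ℝ F]
    [NormedAddCommGroup G] [InnerProductSpace ℝ G]
    [NormedAddCommGroup L] [InnerProductSpace ℝ L] [CompleteSpace L]
    (emb : H →L[ℝ] F) (grad : H →L[ℝ] G) (dvg : H →L[ℝ] L)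
    (S : L →L[ℝ] StrongDual ℝ H)
    (hS : ∀ (q : L) (v : H), S q v = ⟪dvg v, q⟫)
    (C : ℝ) (hNecas : ∀ q : L, ‖q‖ ≤ C * ‖S q‖)
    (f : F) (u : H) (hu : dvg u = 0) :
    (∀ v : H, dvg v = 0 →
        (1 / 2) * ⟪grad u, grad u⟫ - ⟪f, emb u⟫ ≤
          (1 / 2) * ⟪grad v, grad v⟫ - ⟪f, emb v⟫) ↔
      ∃! p : L, ∀ v : H, ⟪grad u, grad v⟫ - ⟪p, dvg v⟫ = ⟪f, emb v⟫ := by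
  set w := (InnerProductSpace.toDual ℝ H).symm (innerSL ℝ (grad u) ∘L grad - innerSL ℝ f ∘L emb)
  have hw (v : H) : ⟪w, v⟫ = ⟪grad u, grad v⟫ - ⟪f, emb v⟫ :=
    InnerProductSpace.toDual_symm_apply
  have hbound (q : L) : ‖q‖ ≤ C * ‖(dvg†) q‖ := by
    rw [dvg.norm_adjoint_apply_eq_of_apply_eq_inner hS]
    exact hNecas q
  calc _ ↔ ∀ v, dvg v = 0 → ⟪grad u, grad v⟫ = ⟪f, emb v⟫ :=
        forall_quadraticEnergy_le_iff (grad : H →ₗ[ℝ] G) ((innerₛₗ ℝ f).comp (emb : H →ₗ[ℝ] F))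
          (K := LinearMap.ker (dvg : H →ₗ[ℝ] L)) hu
    _ ↔ ∀ v, dvg v = 0 → ⟪w, v⟫ = 0 := by simp only [hw, sub_eq_zero]
    _ ↔ ∃! p : L, ∀ v, ⟪w, v⟫ = ⟪p, dvg v⟫ :=
        (dvg.existsUnique_inner_eq_inner_apply_iff hbound w).symm
    _ ↔ _ := existsUnique_congr fun p => forall_congr' fun v => by
        rw [hw, sub_eq_iff_eq_add, sub_eq_iff_eq_add', add_comm]

/-- The pressure in the stationary Stokes equations is the Lagrange multiplier
of the incompressibility constraint, in abstract Hilbert form: `H` plays the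
role of `H₀¹(Ω)ⁿ`, `F` of `L²(Ω)ⁿ`, `G` of the `L²` space of gradients, and
`L` of `L₀²(Ω)`; `emb` is the inclusion `H₀¹ ↪ L²`, `grad` the gradient, `dvg`
the weak divergence, and `S q = ∇q ∈ H⁻¹` is given by `⟨S q, v⟩ = (div v, q)`.
Assuming the Nečas estimate `‖q‖_{L²} ≤ C‖∇q‖_{H⁻¹}`, a divergence-free `u`
minimises `J(v) = ½(∇v,∇v) − (f,v)` over `{v : div v = 0}` iff there is a
(unique) pressure `p` with `(∇u,∇v) − (p, div v) = (f,v)` for all `v`. -/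
theorem stokes_pressure_is_lagrange_multiplier
    {H F G L : Type*}
    [NormedAddCommGroup H] [InnerProductSpace ℝ H] [CompleteSpace H]
    [NormedAddCommGroup F] [InnerProductSpace ℝ F] [CompleteSpace F]
    [NormedAddCommGroup G] [InnerProductSpace ℝ G] [CompleteSpace G]
    [NormedAddCommGroup L] [InnerProductSpace ℝ L] [CompleteSpace L]
    (emb : H →L[ℝ] F) (grad : H →L[ℝ] G) (dvg : H →L[ℝ] L)
    (S : L →L[ℝ] StrongDual ℝ H)
    (hS : ∀ (q : L) (v : H), S q v = ⟪dvg v, q⟫)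
    (C : ℝ) (hC : 0 < C) (hNecas : ∀ q : L, ‖q‖ ≤ C * ‖S q‖)
    (f : F) (u : H) (hu : dvg u = 0) :
    (∀ v : H, dvg v = 0 →
        (1 / 2) * ⟪grad u, grad u⟫ - ⟪f, emb u⟫ ≤
          (1 / 2) * ⟪grad v, grad v⟫ - ⟪f, emb v⟫) ↔
      ∃! p : L, ∀ v : H, ⟪grad u, grad v⟫ - ⟪p, dvg v⟫ = ⟪f, emb v⟫ :=
  stokes_pressure_is_lagrange_multiplier_general emb grad dvg S hS C hNecas f u hu
end

section
/- Let H, M be real Hilbert spaces and T : H → M* a bounded linear operator with ‖T*q‖_{H*} ≥ C‖q‖_M for all q ∈ M. Then for any u* ∈ H* vanishing on Ker T (i.e. u* ∈ (Ker T)°), there exists a unique p ∈ M with T*p = u*, and ‖p‖_M ≤ (1/C)‖u*‖_{H*}. -/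
/-!
The bound `C‖q‖ ≤ ‖T*q‖` makes `T*` injective with closed range. Transported to `H` by the
Riesz isomorphism, a closed range equals its double orthogonal complement; since `T*q` vanishes
at `u` for all `q` exactly when `Tu = 0`, this says that the range of `T*` is `(Ker T)°`.
-/

open InnerProductSpace

theorem LinearMap.mem_range_of_isClosed_range_of_forall_apply_eq_zero {M H : Type*}
    [AddCommGroup M] [Module ℝ M]
    [NormedAddCommGroup H] [InnerProductSpace ℝ H] [CompleteSpace H]
    (S : M →ₗ[ℝ] StrongDual ℝ H) (hS : IsClosed (LinearMap.range S : Set (StrongDual ℝ H)))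
    (φ : StrongDual ℝ H) (hφ : ∀ u, (∀ q, S q u = 0) → φ u = 0) :
    φ ∈ LinearMap.range S := by
  set A : M →ₗ[ℝ] H := (toDual ℝ H).symm.toLinearEquiv.toLinearMap ∘ₗ S
  have hA : ∀ q u, ⟪A q, u⟫_ℝ = S q u := fun q u => toDual_symm_apply
  have hA_closed : IsClosed (LinearMap.range A : Set H) := by
    rw [LinearMap.range_comp, Submodule.map_coe]
    exact (toDual ℝ H).symm.toHomeomorph.isClosedMap _ hS
  have hφA : (toDual ℝ H).symm φ ∈ LinearMap.range A := by
    rw [← hA_closed.submodule_topologicalClosure_eq, ← Submodule.orthogonal_orthogonal_eq_closure]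
    intro u hu
    rw [real_inner_comm, toDual_symm_apply]
    exact hφ u fun q => hA q u ▸ hu (A q) ⟨q, rfl⟩
  obtain ⟨q, hq⟩ := hφA
  exact ⟨q, (toDual ℝ H).symm.injective hq⟩

/-- Under the bound `‖T*q‖ ≥ C‖q‖`, every functional `φ ∈ H*` annihilating
`Ker T` is `T*p` for a unique `p ∈ M`, with `‖p‖ ≤ (1/C)‖φ‖`. -/
theorem annihilator_functional_eq_adjoint_unique
    {H M : Type*} [NormedAddCommGroup H] [InnerProductSpace ℝ H] [CompleteSpace H]
    [NormedAddCommGroup M] [InnerProductSpace ℝ M] [CompleteSpace M]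
    (T : H →L[ℝ] StrongDual ℝ M) (S : M →L[ℝ] StrongDual ℝ H)
    (hadj : ∀ (q : M) (u : H), S q u = T u q)
    (C : ℝ) (hC : 0 < C) (hbound : ∀ q : M, C * ‖q‖ ≤ ‖S q‖)
    (φ : StrongDual ℝ H) (hφ : ∀ v ∈ LinearMap.ker (T : H →ₗ[ℝ] StrongDual ℝ M), φ v = 0) :
    (∃! p : M, S p = φ) ∧ ∀ p : M, S p = φ → ‖p‖ ≤ (1 / C) * ‖φ‖ := by
  obtain ⟨K, hS_anti⟩ := antilipschitzWith_iff_exists_mul_le_norm.mpr ⟨C, hC, hbound⟩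
  have hT_ker : ∀ u, (∀ q, S q u = 0) → T u = 0 := fun u hu => by
    ext q
    rw [← hadj]
    exact hu q
  obtain ⟨p, rfl⟩ := LinearMap.mem_range_of_isClosed_range_of_forall_apply_eq_zero
    (S : M →ₗ[ℝ] StrongDual ℝ H) (hS_anti.isClosed_range S.uniformContinuous) φ
    fun u hu => hφ u (hT_ker u hu)
  refine ⟨⟨p, rfl, fun p' hp' => hS_anti.injective hp'⟩, fun p' hp' => ?_⟩
  rw [← hp', one_div, ← div_eq_inv_mul, le_div_iff₀' hC]
  exact hbound p'
end
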